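/- arXiv:2111.13452 — 3 statements merged into one kernel-verified Lean document; each statement's English description precedes it below -/
import Mathlib

section
/- Let $G : [0,\infty) \to [0,\infty)$ be a decreasing function and $0 < G_0 < \infty$. Then for every $t \ge 0$ with $G(t) < G_0$, one has $\int_t^{\infty} \frac{\liminf_{B \to 0^+} \big(-\frac{G(s+B)-G(s)}{B}\big)}{G_0 - G(s)}\, ds \le \log \frac{G_0}{G_0 - G(t)}$. -/
open Filter Set MeasureTheory

/-- slope tendsto along right neighborhoods -/
theorem hasDerivAt_tendsto_slope_right {f : ℝ → ℝ} {d x : ℝ} (h : HasDerivAt f d x) :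
    Tendsto (fun B : ℝ => (f (x + B) - f x) / B) (nhdsWithin 0 (Set.Ioi 0)) (nhds d) := by
  have hs := hasDerivAt_iff_tendsto_slope.1 h
  have h2 : Tendsto (fun B : ℝ => x + B) (nhdsWithin 0 (Set.Ioi 0)) (nhdsWithin x {x}ᶜ) := by
    apply tendsto_nhdsWithin_of_tendsto_nhds_of_eventually_within
    · have h3 : Tendsto (fun B : ℝ => x + B) (nhds 0) (nhds (x + 0)) :=
        (continuous_const.add continuous_id).tendsto (0 : ℝ)
      rw [add_zero] at h3
      exact h3.mono_left nhdsWithin_le_nhds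
    · filter_upwards [self_mem_nhdsWithin] with B hB
      simp only [Set.mem_compl_iff, Set.mem_singleton_iff]
      intro hc
      have hB0 : (0:ℝ) < B := hB
      nlinarith [hc]
  have h4 := hs.comp h2
  apply h4.congr'
  filter_upwards [self_mem_nhdsWithin] with B hB
  have hB0 : (0:ℝ) < B := hB
  simp only [Function.comp_apply, slope_def_field]
  rw [add_sub_cancel_left]

theorem monotone_quot_integral_le {K : ℝ → ℝ} (hK : Monotone K) {L : ℝ} (hKL : ∀ x, K x ≤ L)
    {t b c : ℝ} (htb : t ≤ b) (hc : 0 < c) :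
    ∫ x in Set.Ioc t b, (K (x + c) - K x) / c ≤ L - K t := by
  have i1 : ∀ a b : ℝ, IntervalIntegrable K volume a b := fun a b => hK.intervalIntegrable
  have i2 : ∀ a b : ℝ, IntervalIntegrable (fun x => K (x + c)) volume a b := fun a b =>
    (hK.comp (fun x y hxy => add_le_add_left hxy c : Monotone fun x : ℝ => x + c)).intervalIntegrable
  rw [← intervalIntegral.integral_of_le htb]
  have e1 : ∫ x in t..b, (K (x + c) - K x) / c
      = ((∫ x in t..b, K (x + c)) - ∫ x in t..b, K x) / c := by
    rw [intervalIntegral.integral_div, intervalIntegral.integral_sub (i2 t b) (i1 t b)]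
  have e2 : (∫ x in t..b, K (x + c)) = ∫ x in (t+c)..(b+c), K x :=
    intervalIntegral.integral_comp_add_right (a := t) (b := b) K c
  have adj1 : (∫ x in t..(t+c), K x) + ∫ x in (t+c)..(b+c), K x = ∫ x in t..(b+c), K x :=
    intervalIntegral.integral_add_adjacent_intervals (i1 _ _) (i1 _ _)
  have adj2 : (∫ x in t..b, K x) + ∫ x in b..(b+c), K x = ∫ x in t..(b+c), K x :=
    intervalIntegral.integral_add_adjacent_intervals (i1 _ _) (i1 _ _)
  have bnd1 : (∫ x in b..(b+c), K x) ≤ c * L := by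
    have := intervalIntegral.integral_mono_on (by linarith : b ≤ b + c) (i1 _ _)
      (intervalIntegrable_const (c := L)) (fun x _ => hKL x)
    simpa [mul_comm] using this
  have bnd2 : c * K t ≤ ∫ x in t..(t+c), K x := by
    have := intervalIntegral.integral_mono_on (by linarith : t ≤ t + c)
      (intervalIntegrable_const (c := K t)) (i1 _ _) (fun x hx => hK hx.1)
    simpa [mul_comm] using this
  rw [e1, e2]
  rw [div_le_iff₀ hc]
  have : (∫ x in (t+c)..(b+c), K x) - ∫ x in t..b, K x
      = (∫ x in b..(b+c), K x) - ∫ x in t..(t+c), K x := by linarith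
  rw [this]
  nlinarith [bnd1, bnd2]

theorem lintegral_quot_le {K : ℝ → ℝ} (hK : Monotone K) {L : ℝ} (hKL : ∀ x, K x ≤ L)
    {t c : ℝ} (hc : 0 < c) :
    ∫⁻ x in Set.Ioi t, ENNReal.ofReal ((K (x + c) - K x) / c) ≤ ENNReal.ofReal (L - K t) := by
  have hunion : Set.Ioi t = ⋃ n : ℕ, Set.Ioc t (t + n) := by
    ext x
    simp only [Set.mem_Ioi, Set.mem_iUnion, Set.mem_Ioc]
    constructor
    · intro hx
      obtain ⟨n, hn⟩ := exists_nat_ge (x - t)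
      exact ⟨n, hx, by linarith⟩
    · rintro ⟨n, hn, -⟩; exact hn
  have hdir : Directed (· ⊆ ·) (fun n : ℕ => Set.Ioc t (t + n)) := by
    intro m n
    refine ⟨max m n, Set.Ioc_subset_Ioc_right ?_, Set.Ioc_subset_Ioc_right ?_⟩
    · have : (m : ℝ) ≤ max m n := by exact_mod_cast Nat.cast_le.2 (le_max_left m n)
      linarith
    · have : (n : ℝ) ≤ max m n := by exact_mod_cast Nat.cast_le.2 (le_max_right m n)
      linarith
  rw [hunion, setLIntegral_iUnion_of_directed _ hdir]
  refine iSup_le fun n => ?_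
  have htb : t ≤ t + n := by linarith [Nat.cast_nonneg (α := ℝ) n]
  have hint : IntegrableOn (fun x => (K (x + c) - K x) / c) (Set.Ioc t (t + n)) volume := by
    have i1 : IntervalIntegrable K volume t (t + n) := hK.intervalIntegrable
    have i2 : IntervalIntegrable (fun x => K (x + c)) volume t (t + n) :=
      (hK.comp (fun x y hxy => add_le_add_left hxy c : Monotone fun x : ℝ => x + c)).intervalIntegrable
    exact ((i2.1.sub i1.1).div_const c)
  have hpos : 0 ≤ᵐ[volume.restrict (Set.Ioc t (t + n))] fun x => (K (x + c) - K x) / c :=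
    Filter.Eventually.of_forall fun x => div_nonneg (by linarith [hK (by linarith : x ≤ x + c)]) hc.le
  rw [← ofReal_integral_eq_lintegral_ofReal hint hpos]
  exact ENNReal.ofReal_le_ofReal (monotone_quot_integral_le hK hKL htb hc)


/-- For a decreasing `G : [0,∞) → [0,∞)` and `0 < G₀ < ∞`, if `G t < G₀` then the
integral of the lower right Dini derivative of `-G` divided by `G₀ - G` over `[t,∞)`
is at most `log (G₀ / (G₀ - G t))`. -/
theorem dini_derivative_integral_le_log
    (G : ℝ → ℝ) (G₀ : ℝ) (hG₀ : 0 < G₀)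
    (hdec : AntitoneOn G (Set.Ici (0 : ℝ)))
    (hnonneg : ∀ s ∈ Set.Ici (0 : ℝ), 0 ≤ G s)
    (t : ℝ) (ht : 0 ≤ t) (hGt : G t < G₀) :
    (∫ s in Set.Ioi t,
        (Filter.liminf (fun B : ℝ => -((G (s + B) - G s) / B))
          (nhdsWithin 0 (Set.Ioi 0))) / (G₀ - G s))
      ≤ Real.log (G₀ / (G₀ - G t)) := by
  have ht0 : 0 ≤ G t := hnonneg t ht
  set f : ℝ → ℝ := fun s => (Filter.liminf (fun B : ℝ => -((G (s + B) - G s) / B))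
      (nhdsWithin 0 (Set.Ioi 0))) / (G₀ - G s) with hfdef
  set Gm : ℝ → ℝ := fun x => G (max x t) with hGmdef
  have hmemt : ∀ x : ℝ, max x t ∈ Set.Ici (0:ℝ) := fun x => le_trans ht (le_max_right x t)
  have hGmanti : Antitone Gm := fun x y hxy => hdec (hmemt x) (hmemt y) (max_le_max hxy le_rfl)
  have hGmle : ∀ x, Gm x ≤ G t := fun x => hdec (Set.mem_Ici.2 ht) (hmemt x) (le_max_right x t)
  have hGmpos : ∀ x, 0 < G₀ - Gm x := fun x => by have := hGmle x; linarith
  have hGm0 : ∀ x, 0 ≤ Gm x := fun x => hnonneg _ (hmemt x)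
  set K : ℝ → ℝ := fun x => Real.log (G₀ - Gm x) with hKdef
  have hKmono : Monotone K := fun x y hxy =>
    Real.log_le_log (hGmpos x) (sub_le_sub_left (hGmanti hxy) G₀)
  have hKL : ∀ x, K x ≤ Real.log G₀ := fun x =>
    Real.log_le_log (hGmpos x) (by linarith [hGm0 x] : G₀ - Gm x ≤ G₀)
  have hGmeq : ∀ x, t ≤ x → Gm x = G x := fun x hx => by
    simp only [hGmdef, max_eq_left hx]
  have hKt : K t = Real.log (G₀ - G t) := by
    simp only [hKdef, hGmdef, max_self]
  have hRHS : Real.log (G₀ / (G₀ - G t)) = Real.log G₀ - K t := by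
    rw [hKt, Real.log_div (ne_of_gt hG₀) (ne_of_gt (by linarith))]
  set M : ℝ → ℝ := fun x => -Gm x with hMdef
  have hMmono : Monotone M := fun x y hxy => neg_le_neg (hGmanti hxy)
  set c : ℕ → ℝ := fun n => 1 / ((n : ℝ) + 1) with hcdef
  have hc : ∀ n, 0 < c n := fun n => by simp only [hcdef]; positivity
  have hcseq : Tendsto c atTop (nhdsWithin 0 (Set.Ioi 0)) := by
    apply tendsto_nhdsWithin_of_tendsto_nhds_of_eventually_within
    · simpa [hcdef] using tendsto_one_div_add_atTop_nhds_zero_nat (𝕜 := ℝ)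
    · exact Eventually.of_forall fun n => Set.mem_Ioi.2 (hc n)
  set g : ℕ → ℝ → ℝ := fun n x => (K (x + c n) - K x) / c n with hgdef
  have hg0 : ∀ n x, 0 ≤ g n x := fun n x =>
    div_nonneg (by have := hKmono (by linarith [hc n] : x ≤ x + c n); linarith) (hc n).le
  -- the main a.e. statement
  have main : ∀ᵐ x, x ∈ Set.Ioi t →
      (f x = deriv K x ∧ Tendsto (fun n => g n x) atTop (nhds (f x)) ∧ 0 ≤ f x) := by
    filter_upwards [hMmono.ae_hasDerivAt] with x hx hxt
    obtain ⟨d, hx⟩ : ∃ d, HasDerivAt M d x := ⟨_, hx⟩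
    have hxt' : t < x := hxt
    have hGm' : HasDerivAt Gm (-d) x := by
      have h := hx.neg
      simp only [hMdef, neg_neg] at h
      exact h.congr_of_eventuallyEq (Eventually.of_forall fun y => by simp)
    have hsub : HasDerivAt (fun y => G₀ - Gm y) d x := by
      exact ((hasDerivAt_const x G₀).sub hGm').congr_deriv (by ring)
    have hKd : HasDerivAt K (d / (G₀ - Gm x)) x := hsub.log (ne_of_gt (hGmpos x))
    have ht2 : Tendsto (fun B : ℝ => -((G (x + B) - G x) / B)) (nhdsWithin 0 (Set.Ioi 0))
        (nhds d) := by
      apply (hasDerivAt_tendsto_slope_right hx).congr'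
      filter_upwards [self_mem_nhdsWithin] with B hB
      have hB0 : (0:ℝ) < B := hB
      simp only [hMdef, hGmdef, max_eq_left (by linarith : t ≤ x + B), max_eq_left hxt'.le]
      ring
    have hliminf : Filter.liminf (fun B : ℝ => -((G (x + B) - G x) / B))
        (nhdsWithin 0 (Set.Ioi 0)) = d := ht2.liminf_eq
    have hfx : f x = d / (G₀ - Gm x) := by
      simp only [hfdef, hliminf, hGmeq x hxt'.le]
    refine ⟨by rw [hfx, hKd.deriv], ?_, ?_⟩
    · have htg := (hasDerivAt_tendsto_slope_right hKd).comp hcseq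
      rw [hfx]
      exact htg
    · rw [hfx]
      exact le_of_tendsto_of_tendsto' tendsto_const_nhds
        ((hasDerivAt_tendsto_slope_right hKd).comp hcseq) (fun n => hg0 n _)
  -- pass to the restricted measure
  have mainr : ∀ᵐ x ∂(volume.restrict (Set.Ioi t)),
      f x = deriv K x ∧ Tendsto (fun n => g n x) atTop (nhds (f x)) ∧ 0 ≤ f x :=
    ((ae_restrict_iff' measurableSet_Ioi).2 main)
  have hfd : f =ᵐ[volume.restrict (Set.Ioi t)] deriv K := mainr.mono fun x hx => hx.1
  have hmeas : AEStronglyMeasurable f (volume.restrict (Set.Ioi t)) :=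
    (measurable_deriv K).aestronglyMeasurable.congr hfd.symm
  have hf0 : 0 ≤ᵐ[volume.restrict (Set.Ioi t)] f := mainr.mono fun x hx => hx.2.2
  rw [integral_eq_lintegral_of_nonneg_ae hf0 hmeas]
  have hgmeas : ∀ n, Measurable fun x => ENNReal.ofReal (g n x) := by
    intro n
    have : Measurable (g n) := by
      have h1 : Measurable fun x => K (x + c n) :=
        hKmono.measurable.comp (measurable_add_const (c n))
      exact (h1.sub hKmono.measurable).div_const _
    exact ENNReal.measurable_ofReal.comp this
  have hlim : (∫⁻ x in Set.Ioi t, ENNReal.ofReal (f x)) ≤ ENNReal.ofReal (Real.log G₀ - K t) := by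
    have h1 : (fun x => ENNReal.ofReal (f x)) =ᵐ[volume.restrict (Set.Ioi t)]
        fun x => Filter.liminf (fun n => ENNReal.ofReal (g n x)) atTop := by
      refine mainr.mono fun x hx => ?_
      exact (((ENNReal.continuous_ofReal.tendsto _).comp hx.2.1).liminf_eq).symm
    calc (∫⁻ x in Set.Ioi t, ENNReal.ofReal (f x))
        = ∫⁻ x in Set.Ioi t, Filter.liminf (fun n => ENNReal.ofReal (g n x)) atTop :=
          lintegral_congr_ae h1
      _ ≤ Filter.liminf (fun n => ∫⁻ x in Set.Ioi t, ENNReal.ofReal (g n x)) atTop :=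
          lintegral_liminf_le hgmeas
      _ ≤ ENNReal.ofReal (Real.log G₀ - K t) := by
          have hb : ∀ n, (∫⁻ x in Set.Ioi t, ENNReal.ofReal (g n x))
              ≤ ENNReal.ofReal (Real.log G₀ - K t) := fun n =>
            lintegral_quot_le hKmono hKL (hc n)
          calc Filter.liminf (fun n => ∫⁻ x in Set.Ioi t, ENNReal.ofReal (g n x)) atTop
              ≤ Filter.liminf (fun _ : ℕ => ENNReal.ofReal (Real.log G₀ - K t)) atTop :=
                Filter.liminf_le_liminf (Eventually.of_forall hb)
            _ = ENNReal.ofReal (Real.log G₀ - K t) := liminf_const _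
  have hKtL : 0 ≤ Real.log G₀ - K t := by linarith [hKL t]
  calc (∫⁻ x in Set.Ioi t, ENNReal.ofReal (f x)).toReal
      ≤ (ENNReal.ofReal (Real.log G₀ - K t)).toReal :=
        ENNReal.toReal_mono ENNReal.ofReal_ne_top hlim
    _ = Real.log G₀ - K t := ENNReal.toReal_ofReal hKtL
    _ = Real.log (G₀ / (G₀ - G t)) := hRHS.symm
end

section
/- For $\beta > 0$ define $g_\beta(t) = \int_t^{\infty} \frac{ds}{s e^{1+(1+\beta)s}}$ for $t > 0$ and $\theta(\beta) = 1 + \int_0^{\infty} (1 - e^{-g_\beta(t)}) e^t \, dt$. Then $\theta(\beta) < +\infty$ for every $\beta > 0$. -/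
open MeasureTheory Set
open scoped ENNReal

/-- `θ(β) = 1 + ∫₀^∞ (1 - e^{-g_β(t)}) e^t dt < ∞` for every `β > 0`, where
`g_β(t) = ∫_t^∞ ds / (s e^{1+(1+β)s})`. -/
theorem theta_finite (β : ℝ) (hβ : 0 < β) :
    (1 : ℝ≥0∞) + ∫⁻ t in Set.Ioi (0 : ℝ),
        ENNReal.ofReal
          ((1 - Real.exp (-(∫ s in Set.Ioi t, 1 / (s * Real.exp (1 + (1 + β) * s))))) *
            Real.exp t) < ⊤ := by
  set f : ℝ → ℝ := fun s => 1 / (s * Real.exp (1 + (1 + β) * s)) with hf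
  set g : ℝ → ℝ := fun t => ∫ s in Set.Ioi t, f s with hg
  set F : ℝ → ℝ≥0∞ := fun t => ENNReal.ofReal ((1 - Real.exp (-(g t))) * Real.exp t) with hF
  -- measurability of f
  have hmf : Measurable f := by
    apply Measurable.div measurable_const
    exact measurable_id.mul ((measurable_const.add (measurable_const.mul measurable_id)).exp)
  -- key pointwise bound for t ≥ 1
  have key : ∀ t : ℝ, t ∈ Set.Ioi (1 : ℝ) →
      (1 - Real.exp (-(g t))) * Real.exp t ≤ Real.exp (-β * t) := by
    intro t ht
    have ht1 : (1 : ℝ) < t := ht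
    have ht0 : (0 : ℝ) < t := lt_trans one_pos ht1
    -- pointwise bound on f on Ioi t
    have hfb : ∀ s ∈ Set.Ioi t, f s ≤ Real.exp (-β * t) * Real.exp (-s) := by
      intro s hs
      have hst : t < s := hs
      have hs1 : (1 : ℝ) ≤ s := le_of_lt (lt_trans ht1 hst)
      have hs0 : (0 : ℝ) < s := lt_of_lt_of_le one_pos hs1
      have h1 : Real.exp ((1 + β) * s) ≤ s * Real.exp (1 + (1 + β) * s) := by
        rw [Real.exp_add]
        have hse : (1 : ℝ) ≤ s * Real.exp 1 := by
          nlinarith [Real.add_one_le_exp (1 : ℝ)]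
        have := mul_le_mul_of_nonneg_right hse (Real.exp_pos ((1 + β) * s)).le
        nlinarith [this]
      have h2 : f s ≤ Real.exp (-((1 + β) * s)) := by
        rw [hf]
        simp only [one_div, Real.exp_neg]
        exact inv_anti₀ (Real.exp_pos _) h1
      refine h2.trans ?_
      rw [← Real.exp_add]
      apply Real.exp_le_exp.2
      nlinarith [hβ.le, hst.le]
    -- integrability of the bound
    have hbint : IntegrableOn (fun s => Real.exp (-β * t) * Real.exp (-s)) (Set.Ioi t) := by
      have := (exp_neg_integrableOn_Ioi t (one_pos)).const_mul (Real.exp (-β * t))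
      simpa [neg_one_mul, IntegrableOn] using this
    -- f is nonnegative on Ioi t
    have hfnn : ∀ s ∈ Set.Ioi t, 0 ≤ f s := by
      intro s hs
      have hs0 : (0 : ℝ) < s := lt_trans ht0 hs
      positivity
    -- integrability of f on Ioi t
    have hfint : IntegrableOn f (Set.Ioi t) := by
      apply Integrable.mono' hbint (hmf.aestronglyMeasurable.restrict)
      filter_upwards [ae_restrict_mem measurableSet_Ioi] with s hs
      rw [Real.norm_eq_abs, abs_of_nonneg (hfnn s hs)]
      exact hfb s hs
    -- bound on g
    have hgb : g t ≤ Real.exp (-β * t) * Real.exp (-t) := by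
      calc g t ≤ ∫ s in Set.Ioi t, Real.exp (-β * t) * Real.exp (-s) :=
            setIntegral_mono_on hfint hbint measurableSet_Ioi hfb
        _ = Real.exp (-β * t) * ∫ s in Set.Ioi t, Real.exp (-s) := by
            rw [integral_const_mul]
        _ = Real.exp (-β * t) * Real.exp (-t) := by rw [integral_exp_neg_Ioi]
    -- 1 - e^{-x} ≤ x
    have h1e : 1 - Real.exp (-(g t)) ≤ g t := by
      have := Real.add_one_le_exp (-(g t))
      linarith
    calc (1 - Real.exp (-(g t))) * Real.exp t ≤ g t * Real.exp t :=
          mul_le_mul_of_nonneg_right h1e (Real.exp_pos t).le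
      _ ≤ (Real.exp (-β * t) * Real.exp (-t)) * Real.exp t :=
          mul_le_mul_of_nonneg_right hgb (Real.exp_pos t).le
      _ = Real.exp (-β * t) := by
          rw [mul_assoc, ← Real.exp_add]; simp
  -- split the integral
  have hsplit : ∫⁻ t in Set.Ioi (0 : ℝ), F t =
      (∫⁻ t in Set.Ioc (0 : ℝ) 1, F t) + ∫⁻ t in Set.Ioi (1 : ℝ), F t := by
    rw [← lintegral_union measurableSet_Ioi Set.Ioc_disjoint_Ioi_same,
      Set.Ioc_union_Ioi_eq_Ioi zero_le_one]
  -- part 1: finite on Ioc 0 1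
  have h1 : ∫⁻ t in Set.Ioc (0 : ℝ) 1, F t < ⊤ := by
    have hb : ∀ t ∈ Set.Ioc (0 : ℝ) 1, F t ≤ ENNReal.ofReal (Real.exp 1) := by
      intro t ht
      apply ENNReal.ofReal_le_ofReal
      calc (1 - Real.exp (-(g t))) * Real.exp t ≤ 1 * Real.exp t := by
            apply mul_le_mul_of_nonneg_right _ (Real.exp_pos t).le
            have := (Real.exp_pos (-(g t))).le
            linarith
        _ = Real.exp t := one_mul _
        _ ≤ Real.exp 1 := Real.exp_le_exp.2 ht.2
    calc ∫⁻ t in Set.Ioc (0 : ℝ) 1, F t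
        ≤ ∫⁻ _ in Set.Ioc (0 : ℝ) 1, ENNReal.ofReal (Real.exp 1) :=
          setLIntegral_mono' measurableSet_Ioc hb
      _ = ENNReal.ofReal (Real.exp 1) * volume (Set.Ioc (0 : ℝ) 1) := by
          rw [setLIntegral_const]
      _ < ⊤ := by
          apply ENNReal.mul_lt_top ENNReal.ofReal_lt_top
          simp [Real.volume_Ioc]
  -- part 2: finite on Ioi 1
  have h2 : ∫⁻ t in Set.Ioi (1 : ℝ), F t < ⊤ := by
    have hb : ∀ t ∈ Set.Ioi (1 : ℝ), F t ≤ ENNReal.ofReal (Real.exp (-β * t)) :=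
      fun t ht => ENNReal.ofReal_le_ofReal (key t ht)
    calc ∫⁻ t in Set.Ioi (1 : ℝ), F t
        ≤ ∫⁻ t in Set.Ioi (1 : ℝ), ENNReal.ofReal (Real.exp (-β * t)) :=
          setLIntegral_mono' measurableSet_Ioi hb
      _ < ⊤ := (exp_neg_integrableOn_Ioi 1 hβ).setLIntegral_lt_top
  have : ∫⁻ t in Set.Ioi (0 : ℝ), F t < ⊤ := by
    rw [hsplit]
    exact ENNReal.add_lt_top.2 ⟨h1, h2⟩
  exact ENNReal.add_lt_top.2 ⟨ENNReal.one_lt_top, this⟩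
end

section
/- With $g_\beta(t) = \int_t^{\infty} \frac{ds}{s e^{1+(1+\beta)s}}$ and $\theta(\beta) = 1 + \int_0^{\infty} (1 - e^{-g_\beta(t)}) e^t\, dt$, one has $\lim_{\beta \to 0^+} \theta(\beta) = +\infty$. -/
open MeasureTheory Set Filter
open scoped ENNReal

/-!
Cutting the inner integral down to `(t, t + 1]` gives `g_β(t) ≥ L := e^{-1-(1+β)(t+1)} / (t + 1)`,
and `1 - e^{-x} ≥ x / (1 + x)` turns this into `(1 - e^{-g_β(t)}) e^t ≥ e^{-2-β(t+1)} / (2(t+1))`.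
For `1 ≤ t ≤ 1/β` the right side is at least `e^{-4} / (4t)`, whose integral over `(1, 1/β]` is
`e^{-4} / 4 · log β⁻¹ → ∞`.
-/

open Real Topology

lemma div_one_add_le_one_sub_exp_neg {x : ℝ} (hx : 0 ≤ x) : x / (1 + x) ≤ 1 - exp (-x) := by
  have h : exp (-x) * (1 + x) ≤ 1 :=
    calc exp (-x) * (1 + x) ≤ exp (-x) * exp x := by gcongr; linarith [add_one_le_exp x]
      _ = 1 := by rw [← exp_add, neg_add_cancel, exp_zero]
  rw [div_le_iff₀ (by positivity)]
  linarith

lemma integrableOn_Ioi_one_div_mul_exp {a t : ℝ} (ha : 0 < a) (ht : 0 < t) :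
    IntegrableOn (fun s => 1 / (s * exp (1 + a * s))) (Ioi t) := by
  refine ((exp_neg_integrableOn_Ioi t ha).const_mul t⁻¹).mono'
    (Measurable.aestronglyMeasurable (by fun_prop)) ?_
  filter_upwards [ae_restrict_mem measurableSet_Ioi] with s (hs : t < s)
  have hs0 : 0 < s := ht.trans hs
  calc ‖1 / (s * exp (1 + a * s))‖ = 1 / (s * exp (1 + a * s)) := norm_of_nonneg (by positivity)
    _ ≤ 1 / (t * exp (a * s)) := by gcongr; linarith
    _ = t⁻¹ * exp (-a * s) := by rw [neg_mul, exp_neg, one_div, mul_inv]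

lemma one_div_mul_exp_le_setIntegral_Ioi {a t : ℝ} (ha : 0 < a) (ht : 0 < t) :
    1 / ((t + 1) * exp (1 + a * (t + 1))) ≤ ∫ s in Ioi t, 1 / (s * exp (1 + a * s)) := by
  have hint := integrableOn_Ioi_one_div_mul_exp ha ht
  calc 1 / ((t + 1) * exp (1 + a * (t + 1)))
        = ∫ _ in Ioc t (t + 1), 1 / ((t + 1) * exp (1 + a * (t + 1))) := by
          simp [measureReal_def]
    _ ≤ ∫ s in Ioc t (t + 1), 1 / (s * exp (1 + a * s)) := by
          refine setIntegral_mono_on (integrableOn_const measure_Ioc_lt_top.ne)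
            (hint.mono_set Ioc_subset_Ioi_self) measurableSet_Ioc fun s hs => ?_
          have hs0 : 0 < s := ht.trans hs.1
          gcongr <;> exact hs.2
    _ ≤ ∫ s in Ioi t, 1 / (s * exp (1 + a * s)) := by
          refine setIntegral_mono_set hint ?_ Ioc_subset_Ioi_self.eventuallyLE
          filter_upwards [ae_restrict_mem measurableSet_Ioi] with s (hs : t < s)
          have hs0 : 0 < s := ht.trans hs
          positivity

lemma exp_neg_four_div_le_one_sub_exp_neg_mul_exp {β t : ℝ} (hβ : 0 ≤ β) (ht : 1 ≤ t)
    (hβt : β * t ≤ 1) :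
    exp (-4) / 4 * t⁻¹ ≤
      (1 - exp (-∫ s in Ioi t, 1 / (s * exp (1 + (1 + β) * s)))) * exp t := by
  set L := 1 / ((t + 1) * exp (1 + (1 + β) * (t + 1)))
  have hL0 : 0 ≤ L := by positivity
  have hL1 : L ≤ 1 := by
    rw [div_le_one (by positivity)]
    exact one_le_mul_of_one_le_of_one_le (by linarith) (one_le_exp (by positivity))
  have hLg : L ≤ ∫ s in Ioi t, 1 / (s * exp (1 + (1 + β) * s)) :=
    one_div_mul_exp_le_setIntegral_Ioi (by linarith) (by linarith)
  have hexp : exp (-2 - β * (t + 1)) = exp t / exp (1 + (1 + β) * (t + 1)) := by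
    rw [← exp_sub]; ring_nf
  have hβt' : β * (t + 1) ≤ 2 := by nlinarith
  calc exp (-4) / 4 * t⁻¹ = exp (-4) / (4 * t) := by ring
    _ ≤ exp (-2 - β * (t + 1)) / (2 * (t + 1)) :=
          div_le_div₀ (exp_pos _).le (exp_le_exp.mpr (by linarith)) (by positivity) (by linarith)
    _ = L / 2 * exp t := by rw [hexp]; simp only [L]; field_simp
    _ ≤ L / (1 + L) * exp t := by gcongr; linarith
    _ ≤ (1 - exp (-L)) * exp t := by gcongr; exact div_one_add_le_one_sub_exp_neg hL0
    _ ≤ _ := by gcongr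

lemma ofReal_mul_log_inv_le_lintegral {β : ℝ} (hβ₀ : 0 < β) (hβ₁ : β ≤ 1) :
    ENNReal.ofReal (exp (-4) / 4 * log β⁻¹) ≤
      ∫⁻ t in Ioi 0,
        ENNReal.ofReal ((1 - exp (-∫ s in Ioi t, 1 / (s * exp (1 + (1 + β) * s)))) * exp t) := by
  have h1 : 1 ≤ β⁻¹ := one_le_inv₀ hβ₀ |>.mpr hβ₁
  have hint : IntegrableOn (fun t : ℝ => exp (-4) / 4 * t⁻¹) (Ioc 1 β⁻¹) :=
    (ContinuousOn.integrableOn_Icc (continuousOn_const.mul (continuousOn_inv₀.mono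
      fun t ht => (zero_lt_one.trans_le ht.1).ne'))).mono_set Ioc_subset_Icc_self
  calc ENNReal.ofReal (exp (-4) / 4 * log β⁻¹)
        = ENNReal.ofReal (∫ t in Ioc 1 β⁻¹, exp (-4) / 4 * t⁻¹) := by
          rw [← intervalIntegral.integral_of_le h1, intervalIntegral.integral_const_mul,
            integral_inv_of_pos one_pos (by positivity), div_one]
    _ = ∫⁻ t in Ioc 1 β⁻¹, ENNReal.ofReal (exp (-4) / 4 * t⁻¹) := by
          refine ofReal_integral_eq_lintegral_ofReal hint ?_
          filter_upwards [ae_restrict_mem measurableSet_Ioc] with t ht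
          have : 0 < t := zero_lt_one.trans ht.1
          positivity
    _ ≤ ∫⁻ t in Ioc 1 β⁻¹,
          ENNReal.ofReal ((1 - exp (-∫ s in Ioi t, 1 / (s * exp (1 + (1 + β) * s)))) * exp t) := by
          refine setLIntegral_mono' measurableSet_Ioc fun t ht => ENNReal.ofReal_le_ofReal ?_
          refine exp_neg_four_div_le_one_sub_exp_neg_mul_exp hβ₀.le ht.1.le ?_
          exact (le_div_iff₀' hβ₀).mp (by rw [one_div]; exact ht.2)
    _ ≤ _ := lintegral_mono_set fun t ht => zero_lt_one.trans ht.1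

/-- With `g_β(t) = ∫_t^∞ ds/(s e^{1+(1+β)s})` and
`θ(β) = 1 + ∫₀^∞ (1 - e^{-g_β(t)}) e^t dt`, we have `θ(β) → ∞` as `β → 0⁺`. -/
theorem theta_tendsto_top :
    Tendsto
      (fun β : ℝ =>
        (1 : ℝ≥0∞) + ∫⁻ t in Set.Ioi (0 : ℝ),
          ENNReal.ofReal
            ((1 - Real.exp (-(∫ s in Set.Ioi t, 1 / (s * Real.exp (1 + (1 + β) * s))))) *
              Real.exp t))
      (nhdsWithin 0 (Set.Ioi 0)) (nhds ⊤) := by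
  have hlog : Tendsto (fun β : ℝ => ENNReal.ofReal (exp (-4) / 4 * log β⁻¹)) (𝓝[>] 0) (𝓝 ⊤) :=
    ENNReal.tendsto_ofReal_atTop.comp
      ((tendsto_log_atTop.comp tendsto_inv_nhdsGT_zero).const_mul_atTop (by positivity))
  refine tendsto_nhds_top_mono hlog ?_
  filter_upwards [Ioc_mem_nhdsGT zero_lt_one] with β ⟨hβ₀, hβ₁⟩
  exact (ofReal_mul_log_inv_le_lintegral hβ₀ hβ₁).trans le_add_self
end
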